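/- Let f₁, f₂, c₀, c₁, c₂ : ℝ → ℝ be arbitrary functions. Let (x₁, x₂, y₁, y₂) ∈ ℝ⁴ with (y₁, y₂) ≠ (0, 0) and x₁y₂ − x₂y₁ ≥ 0. Set u = √(y₁² + y₂²), r = √(x₁² + x₂²), s = (x₁y₁ + x₂y₂)/u, P = f₁(r)s + f₂(r)√(r² − s²), Q = c₀(r) + c₂(r)s² + c₁(r)s√(r² − s²), and G² = uP·y₂ + u²Q·x₂. Then G² = (f₁(r)(x₁y₁ + x₂y₂) + f₂(r)(x₁y₂ − x₂y₁))·y₂ + (c₀(r)(y₁² + y₂²) + c₂(r)(x₁y₁ + x₂y₂)² + c₁(r)(x₁²y₁y₂ − x₁x₂y₁² + x₁x₂y₂² − x₂²y₁y₂))·x₂; in particular, for fixed (x₁, x₂), G² is a homogeneous polynomial of degree 2 in (y₁, y₂). -/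

import Mathlib

open Real

theorem stmt_5 (f₁ f₂ c₀ c₁ c₂ : ℝ → ℝ) (x₁ x₂ y₁ y₂ : ℝ) (hy : (y₁, y₂) ≠ (0, 0))
    (hpos : 0 ≤ x₁ * y₂ - x₂ * y₁)
    (u r s P Q G₂ : ℝ)
    (hu : u = Real.sqrt (y₁ ^ 2 + y₂ ^ 2))
    (hr : r = Real.sqrt (x₁ ^ 2 + x₂ ^ 2))
    (hs : s = (x₁ * y₁ + x₂ * y₂) / u)
    (hP : P = f₁ r * s + f₂ r * Real.sqrt (r ^ 2 - s ^ 2))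
    (hQ : Q = c₀ r + c₂ r * s ^ 2 + c₁ r * s * Real.sqrt (r ^ 2 - s ^ 2))
    (hG : G₂ = u * P * y₂ + u ^ 2 * Q * x₂) :
    G₂ = (f₁ r * (x₁ * y₁ + x₂ * y₂) + f₂ r * (x₁ * y₂ - x₂ * y₁)) * y₂
      + (c₀ r * (y₁ ^ 2 + y₂ ^ 2) + c₂ r * (x₁ * y₁ + x₂ * y₂) ^ 2
        + c₁ r * (x₁ ^ 2 * y₁ * y₂ - x₁ * x₂ * y₁ ^ 2 + x₁ * x₂ * y₂ ^ 2 - x₂ ^ 2 * y₁ * y₂)) * x₂ := by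
  have hy2 : 0 < y₁ ^ 2 + y₂ ^ 2 := by
    rcases eq_or_ne y₁ 0 with h1 | h1
    · have h2 : y₂ ≠ 0 := fun h2 => hy (by simp [h1, h2])
      positivity
    · positivity
  have hu0 : 0 < u := hu ▸ Real.sqrt_pos.mpr hy2
  have hu2 : u ^ 2 = y₁ ^ 2 + y₂ ^ 2 := hu ▸ Real.sq_sqrt hy2.le
  have hr2 : r ^ 2 = x₁ ^ 2 + x₂ ^ 2 := hr ▸ Real.sq_sqrt (by positivity)
  have hsq : Real.sqrt (r ^ 2 - s ^ 2) = (x₁ * y₂ - x₂ * y₁) / u := by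
    have h1 : r ^ 2 - s ^ 2 = ((x₁ * y₂ - x₂ * y₁) / u) ^ 2 := by
      rw [hr2, hs]
      field_simp
      linear_combination (x₁ ^ 2 + x₂ ^ 2) * hu2
    rw [h1, Real.sqrt_sq (div_nonneg hpos hu0.le)]
  rw [hG, hP, hQ, hsq, hs]
  field_simp
  linear_combination x₂ * c₀ r * hu2
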